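/- Let A₀ = [[a, b], [0, 1]] and A₁ = [[1, 0], [c, d]] be real 2×2 matrices with a ≠ 1, b·c ≠ 0, and ((1 − a)·(1 − d) − b·c)·b·c ≥ 0. Then the generalized spectral radius of {A₀, A₁} equals max{ρ(A₀), ρ(A₁)}; in particular {A₀, A₁} has the spectral finiteness property. -/

import Mathlib

/-!
Write `K = (1 - a) * (1 - d) - b * c` and `m = max (ρ A₀) (ρ A₁)`.
If `K = 0`, then `(b, 1 - a)` is a common fixed vector of `A₀` and `A₁`, so a product `M` of `n`
generators has the eigenvalues `1` and `det M`, and `ρ(M) ≤ max 1 |det M| ≤ m ^ n`.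
Otherwise `b * c * K > 0`, and the Hermitian form `q z = c² |(1 - a) z₀ - b z₁|² + b c K |z₁|²` is
positive definite with `q (Aᵢ z) ≤ ρ(Aᵢ)² q z` (so `√q` is an extremal norm); every eigenpair
`(μ, v)` of such an `M` gives `|μ|² q v = q (M v) ≤ m ^ (2 n) q v`.
Hence `ρ(M) ^ (1 / n) ≤ m`, with equality for one of the generators.
-/

open Matrix

/-- The spectral radius of a real 2×2 matrix: the maximum modulus of its
complex eigenvalues. -/
noncomputable def specRad (M : Matrix (Fin 2) (Fin 2) ℝ) : ℝ :=
  (spectralRadius ℂ (M.map Complex.ofReal)).toReal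

/-- `prodsOfLen 𝒜 n` is the set `𝒜ⁿ` of all products of `n` matrices taken
from `𝒜`. -/
def prodsOfLen (𝒜 : Set (Matrix (Fin 2) (Fin 2) ℝ)) (n : ℕ) :
    Set (Matrix (Fin 2) (Fin 2) ℝ) :=
  {M | ∃ l : List (Matrix (Fin 2) (Fin 2) ℝ),
    l.length = n ∧ (∀ X ∈ l, X ∈ 𝒜) ∧ M = l.prod}

/-- The generalized spectral radius of `𝒜`:
`sup_{n ≥ 1} max_{M ∈ 𝒜ⁿ} ρ(M)^(1/n)`. -/
noncomputable def gsr (𝒜 : Set (Matrix (Fin 2) (Fin 2) ℝ)) : ℝ :=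
  sSup {x : ℝ | ∃ n : ℕ, 1 ≤ n ∧ ∃ M ∈ prodsOfLen 𝒜 n,
    x = specRad M ^ ((1 : ℝ) / n)}

/-- `𝒜` has the spectral finiteness property if its generalized spectral
radius is realized as `ρ(M)^(1/n)` for some `n ≥ 1` and some `M ∈ 𝒜ⁿ`. -/
def hasSpectralFiniteness (𝒜 : Set (Matrix (Fin 2) (Fin 2) ℝ)) : Prop :=
  ∃ n : ℕ, 1 ≤ n ∧ ∃ M ∈ prodsOfLen 𝒜 n, gsr 𝒜 = specRad M ^ ((1 : ℝ) / n)

open Complex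

theorem Matrix.exists_mulVec_eq_smul_of_mem_spectrum {K n : Type*} [Field K] [Fintype n]
    [DecidableEq n] {N : Matrix n n K} {μ : K} (hμ : μ ∈ spectrum K N) :
    ∃ v ≠ 0, N *ᵥ v = μ • v := by
  rw [spectrum.mem_iff, isUnit_iff_isUnit_det, isUnit_iff_ne_zero, not_not,
    ← exists_mulVec_eq_zero_iff] at hμ
  obtain ⟨v, hv, hμv⟩ := hμ
  refine ⟨v, hv, ?_⟩
  rw [sub_mulVec, Algebra.algebraMap_eq_smul_one, smul_mulVec, one_mulVec, sub_eq_zero] at hμv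
  exact hμv.symm

section ListProd

variable {n : Type*} [Fintype n] [DecidableEq n]

theorem Matrix.list_prod_mulVec_eq_self {R : Type*} [CommSemiring R] {l : List (Matrix n n R)}
    {w : n → R} (h : ∀ X ∈ l, X *ᵥ w = w) : l.prod *ᵥ w = w := by
  induction l with
  | nil => simp
  | cons X l ih =>
    rw [List.prod_cons, ← mulVec_mulVec, ih fun Y hY => h Y (List.mem_cons_of_mem X hY),
      h X List.mem_cons_self]

theorem Matrix.abs_det_list_prod_le {R : Type*} [CommRing R] [LinearOrder R]
    [IsStrictOrderedRing R] {l : List (Matrix n n R)} {r : R} (h : ∀ X ∈ l, |X.det| ≤ r) :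
    |l.prod.det| ≤ r ^ l.length := by
  induction l with
  | nil => simp
  | cons X l ih =>
    rw [List.prod_cons, det_mul, abs_mul, List.length_cons, pow_succ']
    exact mul_le_mul (h X List.mem_cons_self) (ih fun Y hY => h Y (List.mem_cons_of_mem X hY))
      (abs_nonneg _) ((abs_nonneg _).trans (h X List.mem_cons_self))

theorem Matrix.list_prod_mulVec_le_pow_mul {S : Type*} [CommSemiring S] (q : (n → S) → ℝ)
    {R : ℝ} (hR : 0 ≤ R) {l : List (Matrix n n S)} (h : ∀ X ∈ l, ∀ z, q (X *ᵥ z) ≤ R * q z)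
    (z : n → S) : q (l.prod *ᵥ z) ≤ R ^ l.length * q z := by
  induction l with
  | nil => simp
  | cons X l ih =>
    rw [List.prod_cons, ← mulVec_mulVec, List.length_cons, pow_succ', mul_assoc]
    exact (h X List.mem_cons_self _).trans
      (mul_le_mul_of_nonneg_left (ih fun Y hY => h Y (List.mem_cons_of_mem X hY)) hR)

end ListProd

theorem map_ofReal_mulVec_fin_two (p q r s : ℝ) (z : Fin 2 → ℂ) :
    !![p, q; r, s].map ofReal *ᵥ z = ![p * z 0 + q * z 1, r * z 0 + s * z 1] := by
  ext i
  fin_cases i <;> simp [mulVec, dotProduct, Fin.sum_univ_two]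

theorem mem_spectrum_map_ofReal_iff (M : Matrix (Fin 2) (Fin 2) ℝ) (μ : ℂ) :
    μ ∈ spectrum ℂ (M.map ofReal) ↔ μ ^ 2 - M.trace * μ + M.det = 0 := by
  rw [mem_spectrum_iff_isRoot_charpoly, charpoly_fin_two]
  simp [trace_fin_two, det_fin_two]

theorem specRad_nonneg (M : Matrix (Fin 2) (Fin 2) ℝ) : 0 ≤ specRad M :=
  ENNReal.toReal_nonneg

theorem specRad_le_of_forall_mem_spectrum {M : Matrix (Fin 2) (Fin 2) ℝ} {C : ℝ} (hC : 0 ≤ C)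
    (h : ∀ μ ∈ spectrum ℂ (M.map ofReal), ‖μ‖ ≤ C) : specRad M ≤ C := by
  refine ENNReal.toReal_le_of_le_ofReal hC (iSup₂_le fun μ hμ => ?_)
  rw [← enorm_eq_nnnorm, ← ofReal_norm]
  exact ENNReal.ofReal_le_ofReal (h μ hμ)

theorem specRad_eq_max_abs_of_mul_eq_zero {M : Matrix (Fin 2) (Fin 2) ℝ}
    (h : M 0 1 * M 1 0 = 0) : specRad M = max |M 0 0| |M 1 1| := by
  have hspec : spectrum ℂ (M.map ofReal) = {(M 0 0 : ℂ), (M 1 1 : ℂ)} := by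
    ext μ
    have h' : (M 0 1 : ℂ) * M 1 0 = 0 := by exact_mod_cast h
    rw [mem_spectrum_map_ofReal_iff, trace_fin_two, det_fin_two]
    push_cast
    rw [show μ ^ 2 - (M 0 0 + M 1 1) * μ + (M 0 0 * M 1 1 - M 0 1 * M 1 0)
        = (μ - M 0 0) * (μ - M 1 1) by linear_combination -h']
    simp [sub_eq_zero]
  rw [specRad, spectralRadius, hspec, iSup_pair,
    ENNReal.toReal_sup ENNReal.coe_ne_top ENNReal.coe_ne_top]
  simp [Real.norm_eq_abs]

theorem specRad_le_of_mulVec_eq_self {M : Matrix (Fin 2) (Fin 2) ℝ} {w : Fin 2 → ℝ}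
    (hw : w ≠ 0) (hMw : M *ᵥ w = w) : specRad M ≤ max 1 |M.det| := by
  have hfix : (M - 1).det = 0 :=
    exists_mulVec_eq_zero_iff.mp ⟨w, hw, by rw [sub_mulVec, one_mulVec, hMw, sub_self]⟩
  have htr : M.trace = 1 + M.det := by
    have : (M - 1).det = 1 - M.trace + M.det := by
      rw [det_fin_two, det_fin_two, trace_fin_two]
      simp only [Matrix.sub_apply, one_apply_eq, one_apply_ne Fin.zero_ne_one,
        one_apply_ne Fin.zero_ne_one.symm]
      ring
    linarith
  refine specRad_le_of_forall_mem_spectrum (le_max_of_le_left zero_le_one) fun μ hμ => ?_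
  -- `1` is a root of the characteristic polynomial, so `det M` is the other one.
  rw [mem_spectrum_map_ofReal_iff, htr, ofReal_add, ofReal_one,
    show μ ^ 2 - (1 + (M.det : ℂ)) * μ + M.det = (μ - 1) * (μ - M.det) by ring,
    mul_eq_zero, sub_eq_zero, sub_eq_zero] at hμ
  rcases hμ with rfl | rfl
  · simp
  · simp [norm_real]

theorem specRad_le_of_form_le {q : (Fin 2 → ℂ) → ℝ} (hpos : ∀ z ≠ 0, 0 < q z)
    (hsmul : ∀ (μ : ℂ) z, q (μ • z) = normSq μ * q z) {M : Matrix (Fin 2) (Fin 2) ℝ} {r : ℝ}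
    (hr : 0 ≤ r) (hM : ∀ z, q (M.map ofReal *ᵥ z) ≤ r ^ 2 * q z) : specRad M ≤ r := by
  refine specRad_le_of_forall_mem_spectrum hr fun μ hμ => ?_
  obtain ⟨v, hv, hμv⟩ := exists_mulVec_eq_smul_of_mem_spectrum hμ
  have hμr : normSq μ * q v ≤ r ^ 2 * q v := by simpa only [hμv, hsmul] using hM v
  rw [← pow_le_pow_iff_left₀ (norm_nonneg μ) hr two_ne_zero, Complex.sq_norm]
  exact le_of_mul_le_mul_right hμr (hpos v hv)

section GeneralizedSpectralRadius

variable {𝒜 : Set (Matrix (Fin 2) (Fin 2) ℝ)} {A : Matrix (Fin 2) (Fin 2) ℝ}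

theorem mem_prodsOfLen_one (hA : A ∈ 𝒜) : A ∈ prodsOfLen 𝒜 1 :=
  ⟨[A], rfl, by simpa using hA, by simp⟩

theorem gsr_eq_of_forall_specRad_le_pow (hA : A ∈ 𝒜)
    (hle : ∀ n ≥ 1, ∀ M ∈ prodsOfLen 𝒜 n, specRad M ≤ specRad A ^ n) : gsr 𝒜 = specRad A := by
  have hmem : specRad A ∈ {x : ℝ | ∃ n : ℕ, 1 ≤ n ∧ ∃ M ∈ prodsOfLen 𝒜 n,
      x = specRad M ^ ((1 : ℝ) / n)} :=
    ⟨1, le_rfl, A, mem_prodsOfLen_one hA, by simp⟩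
  have hub : specRad A ∈ upperBounds {x : ℝ | ∃ n : ℕ, 1 ≤ n ∧ ∃ M ∈ prodsOfLen 𝒜 n,
      x = specRad M ^ ((1 : ℝ) / n)} := by
    rintro _ ⟨n, hn, M, hM, rfl⟩
    calc specRad M ^ ((1 : ℝ) / n) ≤ (specRad A ^ n) ^ ((1 : ℝ) / n) :=
          Real.rpow_le_rpow (specRad_nonneg M) (hle n hn M hM) (by positivity)
      _ = specRad A := by
          rw [one_div, Real.pow_rpow_inv_natCast (specRad_nonneg A) (by omega)]
  exact le_antisymm (csSup_le ⟨_, hmem⟩ hub) (le_csSup ⟨_, hub⟩ hmem)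

theorem hasSpectralFiniteness_of_gsr_eq_specRad (hA : A ∈ 𝒜) (h : gsr 𝒜 = specRad A) :
    hasSpectralFiniteness 𝒜 :=
  ⟨1, le_rfl, A, mem_prodsOfLen_one hA, by simp [h]⟩

end GeneralizedSpectralRadius

section Example9

variable {a b c d : ℝ}

noncomputable def extremalForm (a b c d : ℝ) (z : Fin 2 → ℂ) : ℝ :=
  c ^ 2 * normSq ((1 - a) * z 0 - b * z 1) +
    ((1 - a) * (1 - d) - b * c) * (b * c) * normSq (z 1)

theorem extremalForm_smul (μ : ℂ) (z : Fin 2 → ℂ) :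
    extremalForm a b c d (μ • z) = normSq μ * extremalForm a b c d z := by
  simp only [extremalForm, Pi.smul_apply, smul_eq_mul,
    show ∀ x y : ℂ, (1 - a) * (μ * x) - b * (μ * y) = μ * ((1 - a) * x - b * y) by
      intros; ring, normSq_mul]
  ring

theorem extremalForm_nonneg (hK : 0 ≤ ((1 - a) * (1 - d) - b * c) * (b * c))
    (z : Fin 2 → ℂ) : 0 ≤ extremalForm a b c d z :=
  add_nonneg (mul_nonneg (sq_nonneg c) (normSq_nonneg _)) (mul_nonneg hK (normSq_nonneg _))

theorem extremalForm_pos (ha : a ≠ 1) (hc : c ≠ 0)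
    (hK : 0 < ((1 - a) * (1 - d) - b * c) * (b * c)) {z : Fin 2 → ℂ} (hz : z ≠ 0) :
    0 < extremalForm a b c d z := by
  by_cases hz1 : z 1 = 0
  · have hz0 : z 0 ≠ 0 := fun hz0 => hz (by ext i; fin_cases i <;> simp [hz0, hz1])
    have ha' : (1 - a : ℂ) ≠ 0 := by exact_mod_cast sub_ne_zero.mpr (Ne.symm ha)
    simp only [extremalForm, hz1, mul_zero, sub_zero, map_zero, add_zero]
    exact mul_pos (by positivity) (normSq_pos.mpr (mul_ne_zero ha' hz0))
  · exact add_pos_of_nonneg_of_pos (mul_nonneg (sq_nonneg c) (normSq_nonneg _))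
      (mul_pos hK (normSq_pos.mpr hz1))

theorem extremalForm_mulVec_upper_le {R : ℝ} (h1 : 1 ≤ R) (ha : a ^ 2 ≤ R)
    (hK : 0 ≤ ((1 - a) * (1 - d) - b * c) * (b * c)) (z : Fin 2 → ℂ) :
    extremalForm a b c d (!![a, b; 0, 1].map ofReal *ᵥ z) ≤ R * extremalForm a b c d z := by
  have hw : (1 - a : ℂ) * (a * z 0 + b * z 1) - b * z 1 = a * ((1 - a) * z 0 - b * z 1) := by
    ring
  simp only [extremalForm, map_ofReal_mulVec_fin_two, cons_val_zero, cons_val_one, ofReal_zero,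
    ofReal_one, hw, normSq_mul, normSq_ofReal, zero_mul, one_mul, zero_add]
  nlinarith [mul_nonneg (sub_nonneg.mpr ha) (mul_nonneg (sq_nonneg c)
    (normSq_nonneg ((1 - a) * z 0 - b * z 1))),
    mul_nonneg (sub_nonneg.mpr h1) (mul_nonneg hK (normSq_nonneg (z 1)))]

theorem extremalForm_mulVec_lower_le {R : ℝ} (h1 : 1 ≤ R) (hd : d ^ 2 ≤ R)
    (hbc : b * c ≠ 0) (hK : 0 ≤ ((1 - a) * (1 - d) - b * c) * (b * c)) (z : Fin 2 → ℂ) :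
    extremalForm a b c d (!![1, 0; c, d].map ofReal *ᵥ z) ≤ R * extremalForm a b c d z := by
  have hq := extremalForm_nonneg hK z
  have hpos : 0 < (1 - a) * (1 - d) * (b * c) := by nlinarith [sq_pos_of_ne_zero hbc]
  rcases le_total (d ^ 2) 1 with hd1 | hd1
  · have heq : extremalForm a b c d (!![1, 0; c, d].map ofReal *ᵥ z) =
        extremalForm a b c d z -
          (1 + d) * ((1 - a) * (b * c)) * normSq (c * z 0 - (1 - d) * z 1) := by
      simp only [extremalForm, map_ofReal_mulVec_fin_two, cons_val_zero, cons_val_one,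
        normSq_apply, add_re, add_im, sub_re, sub_im, mul_re, mul_im, one_re, one_im, ofReal_re,
        ofReal_im]
      ring
    obtain ⟨hd_lo, hd_hi⟩ := abs_le.mp ((sq_le_one_iff_abs_le_one d).mp hd1)
    have hsign : 0 ≤ (1 + d) * ((1 - a) * (b * c)) :=
      mul_nonneg (by linarith) (pos_of_mul_pos_right (a := 1 - d) (by linarith) (by linarith)).le
    rw [heq]
    nlinarith [mul_nonneg hsign (normSq_nonneg (c * z 0 - (1 - d) * z 1))]
  · have heq : extremalForm a b c d (!![1, 0; c, d].map ofReal *ᵥ z) =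
        d ^ 2 * extremalForm a b c d z +
          (1 + d) * ((1 - a) * (1 - d) - b * c) * (1 - a) * c ^ 2 * normSq (z 0) := by
      simp only [extremalForm, map_ofReal_mulVec_fin_two, cons_val_zero, cons_val_one,
        normSq_apply, add_re, add_im, sub_re, sub_im, mul_re, mul_im, one_re, one_im, ofReal_re,
        ofReal_im]
      ring
    have hd_ne : (1 - d) ^ 2 ≠ 0 :=
      pow_ne_zero 2 (right_ne_zero_of_mul (left_ne_zero_of_mul hpos.ne'))
    -- `hK` and `hpos` say that `K` and `(1 - a) * (1 - d)` both have the sign of `b * c`.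
    have hsame : 0 ≤ (1 - d) * ((1 - a) * ((1 - a) * (1 - d) - b * c)) :=
      nonneg_of_mul_nonneg_left (by nlinarith [sq_nonneg ((1 - a) * (1 - d))]) hpos
    have hsign : (1 + d) * ((1 - a) * (1 - d) - b * c) * (1 - a) ≤ 0 :=
      nonpos_of_mul_nonpos_left (b := (1 - d) ^ 2)
        (by linear_combination mul_nonpos_of_nonpos_of_nonneg (sub_nonpos.mpr hd1) hsame)
        (lt_of_le_of_ne (sq_nonneg _) hd_ne.symm)
    rw [heq]
    nlinarith [mul_nonneg (mul_nonneg (neg_nonneg.mpr hsign) (sq_nonneg c)) (normSq_nonneg (z 0))]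

theorem specRad_list_prod_le_of_eq (hb : b ≠ 0) (hK : (1 - a) * (1 - d) = b * c)
    {l : List (Matrix (Fin 2) (Fin 2) ℝ)}
    (hl : ∀ X ∈ l, X ∈ ({!![a, b; 0, 1], !![1, 0; c, d]} : Set (Matrix (Fin 2) (Fin 2) ℝ))) :
    specRad l.prod ≤ max (max |a| 1) (max 1 |d|) ^ l.length := by
  have hw : ![b, 1 - a] ≠ 0 := fun hw => hb (by simpa using congrFun hw 0)
  have hfix : ∀ X ∈ l, X *ᵥ ![b, 1 - a] = ![b, 1 - a] := by
    intro X hX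
    rcases hl X hX with rfl | rfl <;> ext i <;> fin_cases i <;>
      simp only [mulVec, dotProduct, Fin.sum_univ_two, Fin.zero_eta, Fin.mk_one, of_apply,
        cons_val', cons_val_fin_one, cons_val_zero, cons_val_one, zero_mul, one_mul, zero_add,
        add_zero]
    · ring
    · linear_combination -hK
  have hdet : |l.prod.det| ≤ max (max |a| 1) (max 1 |d|) ^ l.length := by
    refine abs_det_list_prod_le fun X hX => ?_
    rcases hl X hX with rfl | rfl <;> simp [det_fin_two]
  exact (specRad_le_of_mulVec_eq_self hw (list_prod_mulVec_eq_self hfix)).trans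
    (max_le (one_le_pow₀ (by simp)) hdet)

theorem specRad_list_prod_le_of_pos (hK : 0 < ((1 - a) * (1 - d) - b * c) * (b * c))
    {l : List (Matrix (Fin 2) (Fin 2) ℝ)}
    (hl : ∀ X ∈ l, X ∈ ({!![a, b; 0, 1], !![1, 0; c, d]} : Set (Matrix (Fin 2) (Fin 2) ℝ))) :
    specRad l.prod ≤ max (max |a| 1) (max 1 |d|) ^ l.length := by
  set m := max (max |a| 1) (max 1 |d|)
  have hbc : b * c ≠ 0 := right_ne_zero_of_mul hK.ne'
  have ha : a ≠ 1 := by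
    rintro rfl
    nlinarith [sq_pos_of_ne_zero hbc]
  have hm : 1 ≤ m := by simp [m]
  have hm1 : 1 ≤ m ^ 2 := one_le_pow₀ hm
  have hma : a ^ 2 ≤ m ^ 2 := by
    rw [← sq_abs]
    exact pow_le_pow_left₀ (abs_nonneg a) (by simp [m]) 2
  have hmd : d ^ 2 ≤ m ^ 2 := by
    rw [← sq_abs]
    exact pow_le_pow_left₀ (abs_nonneg d) (by simp [m]) 2
  have hstep : ∀ X ∈ l.map (·.map ofReal), ∀ z,
      extremalForm a b c d (X *ᵥ z) ≤ m ^ 2 * extremalForm a b c d z := by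
    intro X hX
    obtain ⟨Y, hY, rfl⟩ := List.mem_map.mp hX
    rcases hl Y hY with rfl | rfl
    · exact extremalForm_mulVec_upper_le hm1 hma hK.le
    · exact extremalForm_mulVec_lower_le hm1 hmd hbc hK.le
  have hmap : l.prod.map ofReal = (l.map (·.map ofReal)).prod :=
    map_list_prod ofRealHom.mapMatrix l
  refine specRad_le_of_form_le (fun _ => extremalForm_pos ha (right_ne_zero_of_mul hbc) hK)
    extremalForm_smul (pow_nonneg (zero_le_one.trans hm) _) fun z => ?_
  calc extremalForm a b c d (l.prod.map ofReal *ᵥ z)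
      ≤ (m ^ 2) ^ (l.map (·.map ofReal)).length * extremalForm a b c d z :=
        hmap ▸ list_prod_mulVec_le_pow_mul _ (sq_nonneg m) hstep z
    _ = (m ^ l.length) ^ 2 * extremalForm a b c d z := by
        rw [List.length_map, ← pow_mul, ← pow_mul, mul_comm 2]

end Example9

theorem gsr_example9_general
    (a b c d : ℝ) (hbc : b * c ≠ 0)
    (h : ((1 - a) * (1 - d) - b * c) * (b * c) ≥ 0)
    (A0 A1 : Matrix (Fin 2) (Fin 2) ℝ)
    (hA0 : A0 = !![a, b; 0, 1]) (hA1 : A1 = !![1, 0; c, d]) :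
    gsr {A0, A1} = max (specRad A0) (specRad A1) ∧
      hasSpectralFiniteness {A0, A1} := by
  have hρ0 : specRad A0 = max |a| 1 := by simp [hA0, specRad_eq_max_abs_of_mul_eq_zero]
  have hρ1 : specRad A1 = max 1 |d| := by simp [hA1, specRad_eq_max_abs_of_mul_eq_zero]
  have hprod : ∀ n ≥ 1, ∀ M ∈ prodsOfLen {A0, A1} n,
      specRad M ≤ max (specRad A0) (specRad A1) ^ n := by
    rintro n - M ⟨l, rfl, hl, rfl⟩
    subst hA0 hA1
    rw [hρ0, hρ1]
    rcases h.eq_or_lt with hK | hK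
    · refine specRad_list_prod_le_of_eq (left_ne_zero_of_mul hbc) ?_ hl
      linarith [(mul_eq_zero.mp hK.symm).resolve_right hbc]
    · exact specRad_list_prod_le_of_pos hK hl
  obtain ⟨A, hA, hAmax⟩ : ∃ A ∈ ({A0, A1} : Set _), specRad A = max (specRad A0) (specRad A1) :=
    (max_choice (specRad A0) (specRad A1)).elim (fun h0 => ⟨A0, by simp, h0.symm⟩)
      (fun h1 => ⟨A1, by simp, h1.symm⟩)
  have hgsr : gsr {A0, A1} = specRad A := gsr_eq_of_forall_specRad_le_pow hA (hAmax ▸ hprod)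
  exact ⟨hgsr.trans hAmax, hasSpectralFiniteness_of_gsr_eq_specRad hA hgsr⟩

/-- Example 9: for `A₀ = !![a, b; 0, 1]` and
`A₁ = !![1, 0; c, d]` with `a ≠ 1`, `b*c ≠ 0` and
`((1-a)(1-d) - b*c) * (b*c) ≥ 0`, the generalized spectral radius of
`{A₀, A₁}` equals `max {ρ(A₀), ρ(A₁)}`; in particular `{A₀, A₁}` has the
spectral finiteness property. -/
theorem gsr_example9
    (a b c d : ℝ) (ha : a ≠ 1) (hbc : b * c ≠ 0)
    (h : ((1 - a) * (1 - d) - b * c) * (b * c) ≥ 0)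
    (A0 A1 : Matrix (Fin 2) (Fin 2) ℝ)
    (hA0 : A0 = !![a, b; 0, 1]) (hA1 : A1 = !![1, 0; c, d]) :
    gsr {A0, A1} = max (specRad A0) (specRad A1) ∧
      hasSpectralFiniteness {A0, A1} :=
  gsr_example9_general a b c d hbc h A0 A1 hA0 hA1
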